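/- arXiv:2401.09751 — 2 statements merged into one kernel-verified Lean document; each statement's English description precedes it below -/
import Mathlib

section
/- Let π : E → X be a discrete opfibration of categories. Then the induced postcomposition functor Diag←(π) : Diag←(E) → Diag←(X) on contravariant diagram categories is itself a discrete opfibration. -/
open CategoryTheory

universe v u

variable {Eb X : Type u} [Category.{v} Eb] [Category.{v} X]

/-- `p = (e', fb)` is a lift of `f : π.obj e ⟶ y` with domain `e`. -/
def Lifts (π : Eb ⥤ X) (e : Eb) {y : X} (f : π.obj e ⟶ y) (p : Σ e' : Eb, e ⟶ e') : Prop :=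
  ∃ h : π.obj p.1 = y, π.map p.2 ≫ eqToHom h = f

/-- A functor is a discrete opfibration if every morphism out of the image of an object
has a unique lift with prescribed domain. -/
def IsDiscreteOpfibration (π : Eb ⥤ X) : Prop :=
  ∀ (e : Eb) (y : X) (f : π.obj e ⟶ y), ∃! p : Σ e' : Eb, e ⟶ e', Lifts π e f p

/-!
Lifting `(R, ρ)` is lifting the natural transformation `R ⋙ Db ⋙ π = R ⋙ D ⟶ E` out of the
functor `R ⋙ Db`, and this works for any source functor. Each component lifts uniquely, which
fixes the objects of the lifted diagram. For `u : k ⟶ k'` the lifts `ρb.app k` and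
`Db.map (R.map u) ≫ ρb.app k'` lie over morphisms that differ by `E.map u` (naturality of `ρ`),
so by uniqueness of lifts the second factors through the first via a morphism over `E.map u`:
that is the lift of `u`, and the factorisation is the naturality of `ρb`. Since a discrete
opfibration is faithful, functoriality and uniqueness of the whole lift come for free.
-/

def LiftsNatTrans {K : Type*} [Category K] (π : Eb ⥤ X) {F : K ⥤ Eb} {E : K ⥤ X}
    (τ : F ⋙ π ⟶ E) (p : Σ G : K ⥤ Eb, F ⟶ G) : Prop :=
  ∃ h : p.1 ⋙ π = E, ∀ k : K, π.map (p.2.app k) = τ.app k ≫ eqToHom (Functor.congr_obj h k).symm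

namespace IsDiscreteOpfibration

variable {π : Eb ⥤ X}

theorem sigma_eq_of_map_comp_eqToHom (hπ : IsDiscreteOpfibration π) {e e₁ e₂ : Eb}
    (g₁ : e ⟶ e₁) (g₂ : e ⟶ e₂) (h : π.obj e₁ = π.obj e₂) (hg : π.map g₁ ≫ eqToHom h = π.map g₂) :
    (⟨e₁, g₁⟩ : Σ e', e ⟶ e') = ⟨e₂, g₂⟩ :=
  (hπ e _ (π.map g₂)).unique ⟨h, hg⟩ ⟨rfl, Category.comp_id _⟩

theorem faithful (hπ : IsDiscreteOpfibration π) : π.Faithful where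
  map_injective {_ _} g g' h :=
    eq_of_heq (Sigma.mk.inj (hπ.sigma_eq_of_map_comp_eqToHom g g' rfl (by simpa using h))).2

theorem exists_map_eq_and_comp_eq (hπ : IsDiscreteOpfibration π) {e e₁ e₂ : Eb}
    (g₁ : e ⟶ e₁) (g₂ : e ⟶ e₂) (t : π.obj e₁ ⟶ π.obj e₂) (ht : π.map g₁ ≫ t = π.map g₂) :
    ∃ h : e₁ ⟶ e₂, π.map h = t ∧ g₁ ≫ h = g₂ := by
  obtain ⟨⟨e₃, h⟩, ⟨he₃, hh⟩, -⟩ := hπ e₁ _ t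
  obtain ⟨rfl, hg⟩ := Sigma.mk.inj_iff.mp
    (hπ.sigma_eq_of_map_comp_eqToHom (g₁ ≫ h) g₂ he₃ (by simp [hh, ht]))
  exact ⟨h, by simpa using hh, eq_of_heq hg⟩

section NatTrans

variable {K : Type*} [Category K] {F : K ⥤ Eb} {E : K ⥤ X}

theorem exists_liftsNatTrans (hπ : IsDiscreteOpfibration π) (τ : F ⋙ π ⟶ E) :
    ∃ p, LiftsNatTrans π τ p := by
  have := hπ.faithful
  choose p hp using fun k => (hπ (F.obj k) (E.obj k) (τ.app k)).exists
  choose hobj hσ using hp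
  have hmap : ∀ ⦃k k' : K⦄ (u : k ⟶ k'), ∃ m : (p k).1 ⟶ (p k').1,
      π.map m = eqToHom (hobj k) ≫ E.map u ≫ eqToHom (hobj k').symm ∧
        (p k).2 ≫ m = F.map u ≫ (p k').2 := fun k k' u =>
    hπ.exists_map_eq_and_comp_eq _ _ _ <| by
      rw [reassoc_of% hσ k, ← τ.naturality_assoc, ← hσ k']
      simp
  choose m hm hcomm using hmap
  have hm' {k k' : K} (u : k ⟶ k') : π.map (m u) ≍ E.map u :=
    (conj_eqToHom_iff_heq' _ _ _ _).mp (hm u)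
  let G : K ⥤ Eb := Functor.Faithful.div E π (fun k => (p k).1) hobj (fun u => m u) (hm' _)
  refine ⟨⟨G, { app k := (p k).2, naturality _ _ u := (hcomm u).symm }⟩,
    Functor.hext hobj fun _ _ u => hm' u, fun k => ?_⟩
  rw [← hσ k, Category.assoc, eqToHom_trans]
  exact (Category.comp_id _).symm

theorem liftsNatTrans_unique (hπ : IsDiscreteOpfibration π) (τ : F ⋙ π ⟶ E)
    {p q : Σ G : K ⥤ Eb, F ⟶ G} (hp : LiftsNatTrans π τ p) (hq : LiftsNatTrans π τ q) :
    p = q := by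
  have := hπ.faithful
  obtain ⟨G₁, σ₁⟩ := p
  obtain ⟨G₂, σ₂⟩ := q
  obtain ⟨h₁, hσ₁⟩ := hp
  obtain ⟨h₂, hσ₂⟩ := hq
  have hobj (k : K) : G₁.obj k = G₂.obj k :=
    congrArg Sigma.fst <| hπ.sigma_eq_of_map_comp_eqToHom (σ₁.app k) (σ₂.app k)
      ((Functor.congr_obj h₁ k).trans (Functor.congr_obj h₂ k).symm) (by simp [hσ₁, hσ₂])
  obtain rfl : G₁ = G₂ := CategoryTheory.Functor.ext hobj fun k k' u => π.map_injective <| by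
    have e₁ := Functor.congr_hom h₁ u
    have e₂ := Functor.congr_hom h₂ u
    simp only [Functor.comp_map] at e₁ e₂
    simp [e₁, e₂, eqToHom_map]
  obtain rfl : σ₁ = σ₂ := NatTrans.ext <| funext fun k => π.map_injective <| by rw [hσ₁, hσ₂]
  rfl

theorem existsUnique_liftsNatTrans (hπ : IsDiscreteOpfibration π) (τ : F ⋙ π ⟶ E) :
    ∃! p, LiftsNatTrans π τ p :=
  let ⟨p, hp⟩ := hπ.exists_liftsNatTrans τ
  ⟨p, hp, fun _ hq => hπ.liftsNatTrans_unique τ hq hp⟩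

end NatTrans

end IsDiscreteOpfibration

/-- If `π : Eb ⥤ X` is a discrete opfibration then the postcomposition functor
`Diag←(π) : Diag←(Eb) ⥤ Diag←(X)` is a discrete opfibration: given a morphism
`(R, ρ) : (J, D) ⟶ (K, E)` of contravariant diagrams in `X` (so `R : K ⥤ J` and
`ρ : R ⋙ D ⟶ E`) and a lift `Db` of `D` along `π`, there is a unique pair
`(Eb', ρb)` consisting of a diagram `Eb' : K ⥤ Eb` and `ρb : R ⋙ Db ⟶ Eb'` lying
over `(R, ρ)`, i.e. with `Eb' ⋙ π = E` and `π` sending each component of `ρb` to the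
corresponding component of `ρ`. -/
theorem diagContra_map_isDiscreteOpfibration
    (π : Eb ⥤ X) (hπ : IsDiscreteOpfibration π)
    {J K : Type v} [SmallCategory J] [SmallCategory K]
    (D : J ⥤ X) (E : K ⥤ X) (R : K ⥤ J) (ρ : R ⋙ D ⟶ E)
    (Db : J ⥤ Eb) (hDb : Db ⋙ π = D) :
    ∃! p : Σ Eb' : K ⥤ Eb, (R ⋙ Db ⟶ Eb'),
      ∃ h : p.1 ⋙ π = E,
        ∀ k : K, π.map (p.2.app k) =
          eqToHom (Functor.congr_obj hDb (R.obj k)) ≫ ρ.app k ≫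
            eqToHom (Functor.congr_obj h k).symm := by
  simpa [LiftsNatTrans, eqToHom_app] using
    hπ.existsUnique_liftsNatTrans
      ((Functor.associator R Db π).hom ≫ Functor.whiskerLeft R (eqToHom hDb) ≫ ρ)
end

section
/- Let π : E → X be a discrete opfibration. Then the induced functor Diag→^ps(π) : Diag→^ps(E) → Diag→^ps(X) on pseudo covariant diagram categories is a discrete fibration: for every pseudo morphism (S, σ) : (J, D) → (K, E') in Diag→^ps(X) and every lift Ē of E' along π, there is a unique pseudo morphism (S, σ̄) : (J, D̄) → (K, Ē) in Diag→^ps(E) lying over (S, σ). -/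
open CategoryTheory

universe v u

variable {Eb X : Type u} [Category.{v} Eb] [Category.{v} X]

namespace DOFAux

variable {π : Eb ⥤ X} (hπ : IsDiscreteOpfibration π)

include hπ

noncomputable def lobj (e : Eb) {y : X} (f : π.obj e ⟶ y) : Eb :=
  (hπ e y f).exists.choose.1

noncomputable def lmap (e : Eb) {y : X} (f : π.obj e ⟶ y) : e ⟶ lobj hπ e f :=
  (hπ e y f).exists.choose.2

lemma lobj_eq (e : Eb) {y : X} (f : π.obj e ⟶ y) : π.obj (lobj hπ e f) = y :=
  (hπ e y f).exists.choose_spec.choose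

lemma lmap_eq (e : Eb) {y : X} (f : π.obj e ⟶ y) :
    π.map (lmap hπ e f) ≫ eqToHom (lobj_eq hπ e f) = f :=
  (hπ e y f).exists.choose_spec.choose_spec

lemma luniq {e : Eb} {y : X} (f : π.obj e ⟶ y) {e₁ e₂ : Eb}
    (g₁ : e ⟶ e₁) (g₂ : e ⟶ e₂) (h₁ : π.obj e₁ = y) (h₂ : π.obj e₂ = y)
    (hg₁ : π.map g₁ ≫ eqToHom h₁ = f) (hg₂ : π.map g₂ ≫ eqToHom h₂ = f) :
    ∃ he : e₁ = e₂, g₁ ≫ eqToHom he = g₂ := by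
  have h := ((hπ e y f).unique (y₁ := ⟨e₁, g₁⟩) (y₂ := ⟨e₂, g₂⟩) ⟨h₁, hg₁⟩ ⟨h₂, hg₂⟩)
  have hfst : e₁ = e₂ := congrArg Sigma.fst h
  subst hfst
  refine ⟨rfl, ?_⟩
  simp only [eqToHom_refl, Category.comp_id]
  simpa using h

lemma hom_ext {e e' : Eb} {g g' : e ⟶ e'} (h : π.map g = π.map g') : g = g' := by
  obtain ⟨he, hg⟩ := luniq hπ (π.map g) g g' rfl rfl (by simp) (by simp [h])
  simpa using hg

lemma isIso_of_map {e e' : Eb} (g : e ⟶ e') (hg : IsIso (π.map g)) : IsIso g := by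
  set w : π.obj e' ⟶ π.obj e := inv (π.map g) with hw
  have h1 : π.map (g ≫ lmap hπ e' w) ≫ eqToHom (lobj_eq hπ e' w) = 𝟙 (π.obj e) := by
    rw [Functor.map_comp, Category.assoc, lmap_eq]
    simp [hw]
  obtain ⟨he, hg2⟩ := luniq hπ (𝟙 (π.obj e)) (g ≫ lmap hπ e' w) (𝟙 e)
    (lobj_eq hπ e' w) rfl h1 (by simp)
  have hminv : π.map (lmap hπ e' w ≫ eqToHom he) = w := by
    rw [Functor.map_comp, eqToHom_map]
    exact lmap_eq hπ e' w
  refine ⟨⟨lmap hπ e' w ≫ eqToHom he, ?_, ?_⟩⟩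
  · rw [← Category.assoc]; exact hg2
  · apply hom_ext hπ
    rw [Functor.map_comp, hminv]
    simp [hw]

theorem key {A : Type*} [Category A] (F : A ⥤ Eb) (G : A ⥤ X) (θ : F ⋙ π ⟶ G) :
    ∃! q : Σ G' : A ⥤ Eb, F ⟶ G',
      ∃ h : q.1 ⋙ π = G,
        ∀ a, π.map (q.2.app a) = θ.app a ≫ eqToHom (Functor.congr_obj h a).symm := by
  let ob : A → Eb := fun a => lobj hπ (F.obj a) (θ.app a)
  have hob : ∀ a, π.obj (ob a) = G.obj a := fun a => lobj_eq hπ _ _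
  let ap : ∀ a, F.obj a ⟶ ob a := fun a => lmap hπ (F.obj a) (θ.app a)
  have hap : ∀ a, π.map (ap a) ≫ eqToHom (hob a) = θ.app a := fun a => lmap_eq hπ _ _
  have hap' : ∀ a, π.map (ap a) = θ.app a ≫ eqToHom (hob a).symm := by
    intro a; rw [← hap a]; simp
  have codom : ∀ {a b : A} (u : a ⟶ b),
      lobj hπ (ob a) (eqToHom (hob a) ≫ G.map u) = ob b := by
    intro a b u
    have c1 : π.map (ap a ≫ lmap hπ (ob a) (eqToHom (hob a) ≫ G.map u)) ≫
        eqToHom (lobj_eq hπ (ob a) (eqToHom (hob a) ≫ G.map u)) = θ.app a ≫ G.map u := by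
      rw [Functor.map_comp, Category.assoc, lmap_eq, ← Category.assoc, hap]
    have c2 : π.map (F.map u ≫ ap b) ≫ eqToHom (hob b) = θ.app a ≫ G.map u := by
      rw [Functor.map_comp, Category.assoc, hap]
      exact θ.naturality u
    exact (luniq hπ (θ.app a ≫ G.map u) _ _ _ _ c1 c2).1
  let mp : ∀ {a b : A}, (a ⟶ b) → (ob a ⟶ ob b) := fun {a b} u =>
    lmap hπ (ob a) (eqToHom (hob a) ≫ G.map u) ≫ eqToHom (codom u)
  have hmp : ∀ {a b : A} (u : a ⟶ b),
      π.map (mp u) ≫ eqToHom (hob b) = eqToHom (hob a) ≫ G.map u := by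
    intro a b u
    show π.map (lmap hπ (ob a) (eqToHom (hob a) ≫ G.map u) ≫ eqToHom (codom u)) ≫ _ = _
    rw [Functor.map_comp, eqToHom_map, Category.assoc, eqToHom_trans]
    exact lmap_eq hπ _ _
  have hmp' : ∀ {a b : A} (u : a ⟶ b),
      π.map (mp u) = eqToHom (hob a) ≫ G.map u ≫ eqToHom (hob b).symm := by
    intro a b u
    rw [← Category.assoc, ← hmp u]
    simp
  let G' : A ⥤ Eb :=
    { obj := ob
      map := mp
      map_id := fun a => hom_ext hπ (by
        show π.map (mp (𝟙 a)) = π.map (𝟙 (ob a))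
        rw [hmp' (𝟙 a)]; simp)
      map_comp := fun u v => hom_ext hπ (by
        show π.map (mp (u ≫ v)) = π.map (mp u ≫ mp v)
        rw [Functor.map_comp π (mp u) (mp v), hmp' u, hmp' v, hmp' (u ≫ v)]
        simp) }
  let φ : F ⟶ G' :=
    { app := ap
      naturality := fun a b u => hom_ext hπ (by
        show π.map (F.map u ≫ ap b) = π.map (ap a ≫ mp u)
        rw [Functor.map_comp, Functor.map_comp, hap' a, hap' b, hmp' u]
        simp only [Category.assoc, eqToHom_trans_assoc, eqToHom_refl, Category.id_comp]
        rw [show π.map (F.map u) = (F ⋙ π).map u from rfl, ← Category.assoc,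
          θ.naturality u, Category.assoc]) }
  have h : G' ⋙ π = G := CategoryTheory.Functor.ext hob (fun a b u => hmp' u)
  refine ⟨⟨G', φ⟩, ⟨h, fun a => hap' a⟩, ?_⟩
  rintro ⟨G'', φ''⟩ ⟨h'', hcomp⟩
  have he : ∀ a, G''.obj a = ob a := by
    intro a
    obtain ⟨hea, -⟩ := luniq hπ (θ.app a) (φ''.app a) (ap a)
      (Functor.congr_obj h'' a) (hob a) (by rw [hcomp a]; simp) (hap a)
    exact hea
  have heφ : ∀ a, φ''.app a ≫ eqToHom (he a) = ap a := by
    intro a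
    obtain ⟨hea, hga⟩ := luniq hπ (θ.app a) (φ''.app a) (ap a)
      (Functor.congr_obj h'' a) (hob a) (by rw [hcomp a]; simp) (hap a)
    exact hga
  have hGG : G'' = G' := by
    refine CategoryTheory.Functor.ext he (fun a b u => ?_)
    apply hom_ext hπ
    have h1 : π.map (G''.map u) = eqToHom (Functor.congr_obj h'' a) ≫ G.map u ≫
        eqToHom (Functor.congr_obj h'' b).symm := by
      have := Functor.congr_hom h'' u
      simpa using this
    rw [h1, Functor.map_comp, Functor.map_comp, eqToHom_map, eqToHom_map,
      show G'.map u = mp u from rfl, hmp' u]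
    simp
  subst hGG
  have hφφ : φ'' = φ := by
    apply NatTrans.ext
    funext a
    have := heφ a
    simpa using this
  rw [hφφ]

end DOFAux

/-- If `π : Eb ⥤ X` is a discrete opfibration then the postcomposition functor
`Diag→^ps(π) : Diag→^ps(Eb) ⥤ Diag→^ps(X)` on pseudo covariant diagram categories is a
discrete fibration: for every pseudo morphism `(S, σ) : (J, D) ⟶ (K, E')` in
`Diag→^ps(X)` (so `S : J ⥤ K` and `σ : D ⟶ S ⋙ E'` a natural isomorphism) and every
lift `Ebar` of `E'` along `π`, there is a unique pseudo morphism
`(S, σb) : (J, Db) ⟶ (K, Ebar)` in `Diag→^ps(Eb)` lying over `(S, σ)`. -/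
theorem diagCovPseudo_map_isDiscreteFibration
    (π : Eb ⥤ X) (hπ : IsDiscreteOpfibration π)
    {J K : Type v} [SmallCategory J] [SmallCategory K]
    (D : J ⥤ X) (E' : K ⥤ X) (S : J ⥤ K) (σ : D ⟶ S ⋙ E') (hσ : IsIso σ)
    (Ebar : K ⥤ Eb) (hEbar : Ebar ⋙ π = E') :
    ∃! p : Σ Db : J ⥤ Eb, (Db ⟶ S ⋙ Ebar),
      IsIso p.2 ∧
      ∃ h : p.1 ⋙ π = D,
        ∀ j : J, π.map (p.2.app j) =
          eqToHom (Functor.congr_obj h j) ≫ σ.app j ≫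
            eqToHom (Functor.congr_obj hEbar (S.obj j)).symm := by
  haveI := hσ
  have hfun : (S ⋙ Ebar) ⋙ π = S ⋙ E' := by rw [Functor.assoc, hEbar]
  let θ : (S ⋙ Ebar) ⋙ π ⟶ D := eqToHom hfun ≫ inv σ
  have hθ : ∀ j, θ.app j = eqToHom (Functor.congr_obj hEbar (S.obj j)) ≫ inv (σ.app j) := by
    intro j
    simp [θ, eqToHom_app, NatIso.isIso_inv_app]
  obtain ⟨⟨Db, φ⟩, ⟨h, hφ⟩, huniq⟩ := DOFAux.key hπ (S ⋙ Ebar) D θ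
  have hφ' : ∀ j, π.map (φ.app j) =
      eqToHom (Functor.congr_obj hEbar (S.obj j)) ≫ inv (σ.app j) ≫
        eqToHom (Functor.congr_obj h j).symm := by
    intro j
    rw [hφ j, hθ j, Category.assoc]
  haveI : ∀ j, IsIso (φ.app j) := by
    intro j
    apply DOFAux.isIso_of_map hπ
    rw [hφ' j]
    infer_instance
  haveI : IsIso φ := NatIso.isIso_of_isIso_app φ
  have hinv : ∀ j, π.map ((inv φ).app j) =
      eqToHom (Functor.congr_obj h j) ≫ σ.app j ≫
        eqToHom (Functor.congr_obj hEbar (S.obj j)).symm := by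
    intro j
    rw [NatIso.isIso_inv_app, Functor.map_inv]
    apply IsIso.inv_eq_of_hom_inv_id
    rw [hφ' j]
    simp
  refine ⟨⟨Db, inv φ⟩, ⟨inferInstance, h, hinv⟩, ?_⟩
  rintro ⟨Db', σb'⟩ ⟨hiso, h', hcomp⟩
  haveI := hiso
  have hcomp' : ∀ j, π.map ((inv σb').app j) =
      θ.app j ≫ eqToHom (Functor.congr_obj h' j).symm := by
    intro j
    rw [NatIso.isIso_inv_app, Functor.map_inv]
    apply IsIso.inv_eq_of_hom_inv_id
    rw [hcomp j, hθ j]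
    simp
  have heq2 := huniq ⟨Db', inv σb'⟩ ⟨h', hcomp'⟩
  have hfst : Db' = Db := congrArg Sigma.fst heq2
  subst hfst
  have hsnd : inv σb' = φ := by simpa using heq2
  have hfin : σb' = inv φ := IsIso.eq_inv_of_hom_inv_id (by rw [← hsnd]; simp)
  rw [hfin]
end
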